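/- arXiv:1702.01812 — 2 statements merged into one kernel-verified Lean document; each statement's English description precedes it below -/
import Mathlib

section
/- Let K ≥ 1 be the number of neighborhoods with sizes n_1,…,n_K ≥ 1, m_k = C(n_k,2), M = ∑_{k=1}^K m_k ≥ 1, N = max_k n_k, let X = ∏_{k=1}^K {0,1}^{m_k}, and let p be an exponential-family pmf with local dependence on X with sufficient statistic s : X → ℝ^d. Let q ≥ 1 and let J : ℝ^d → ℝ^q be a linear map (interpreted as the transposed gradient (∇_θ η(θ))ᵀ at the data-generating parameter) satisfying ‖J(s(x) − s(y))‖_∞ ≤ A·d(x,y)·N for all x,y ∈ X, where A > 0 and d is the Hamming distance. Then for every ε > 0, the probability under p that ‖J(s(X)) − E[J(s(X))]‖₂ ≥ ε·M is at most 2·q·exp(−ε²·M/(2·q·A²·N⁶)). -/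
open scoped BigOperators

/-- The sample space of binary within-neighborhood edge variables. -/
abbrev Cfg (K : ℕ) (n : Fin K → ℕ) : Type :=
  (k : Fin K) → Fin (Nat.choose (n k) 2) → Bool

/-- Hamming distance between two configurations. -/
def hamDist {K : ℕ} {n : Fin K → ℕ} (x y : Cfg K n) : ℕ :=
  ∑ k, (Finset.univ.filter (fun e => x k e ≠ y k e)).card

/-!
Under `p` the blocks are independent: the Gibbs weight of an energy that is a sum over blocks
is the product of the blockwise softmax weights. Changing block `k` alone moves each coordinate
of `J (s x)` by at most `A * m_k * N`, so McDiarmid's inequality (Hoeffding's lemma applied one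
block at a time to the exponential moment) bounds each coordinate's two-sided tail at level `t`
by `2 * exp (-t ^ 2 / (2 * ∑ k, (A * m_k * N) ^ 2))`. A vector of Euclidean norm at least `ε * M`
has a coordinate of size at least `ε * M / √q`, and `m_k ≤ N ^ 2` gives
`∑ k, (A * m_k * N) ^ 2 ≤ A ^ 2 * N ^ 6 * M`.
-/

open Finset Real

noncomputable def softmax {α : Type*} [Fintype α] (u : α → ℝ) (a : α) : ℝ :=
  exp (u a) / ∑ b, exp (u b)

lemma softmax_nonneg {α : Type*} [Fintype α] (u : α → ℝ) (a : α) : 0 ≤ softmax u a :=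
  div_nonneg (exp_nonneg _) (sum_nonneg fun _ _ => exp_nonneg _)

lemma sum_softmax {α : Type*} [Fintype α] [Nonempty α] (u : α → ℝ) :
    ∑ a, softmax u a = 1 := by
  simp only [softmax, ← sum_div]
  exact div_self (sum_pos (fun _ _ => exp_pos _) univ_nonempty).ne'

lemma softmax_sum_pi {ι : Type*} [Fintype ι] [DecidableEq ι] {X : ι → Type*}
    [∀ i, Fintype (X i)] (u : ∀ i, X i → ℝ) (x : ∀ i, X i) :
    softmax (fun y => ∑ i, u i (y i)) x = ∏ i, softmax (u i) (x i) := by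
  simp only [softmax, exp_sum, prod_div_distrib, Fintype.prod_sum]

section Averages

variable {α : Type*} [Fintype α] {v : α → ℝ}

lemma abs_sum_mul_sub_sum_mul_le (hv0 : ∀ a, 0 ≤ v a) (hv1 : ∑ a, v a = 1)
    {f g : α → ℝ} {c : ℝ} (hfg : ∀ a, |f a - g a| ≤ c) :
    |∑ a, v a * f a - ∑ a, v a * g a| ≤ c := by
  rw [← sum_sub_distrib]
  calc |∑ a, (v a * f a - v a * g a)| ≤ ∑ a, v a * c := by
        refine (abs_sum_le_sum_abs _ _).trans (sum_le_sum fun a _ => ?_)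
        rw [← mul_sub, abs_mul, abs_of_nonneg (hv0 a)]
        exact mul_le_mul_of_nonneg_left (hfg a) (hv0 a)
    _ = c := by rw [← sum_mul, hv1, one_mul]

/-- Hoeffding's lemma, with the constant `c ^ 2 / 2` in place of the optimal `c ^ 2 / 8`. -/
lemma sum_mul_exp_sub_mean_le (hv0 : ∀ a, 0 ≤ v a) (hv1 : ∑ a, v a = 1)
    {h : α → ℝ} {c : ℝ} (hc : ∀ a b, |h a - h b| ≤ c) :
    ∑ a, v a * exp (h a - ∑ b, v b * h b) ≤ exp (c ^ 2 / 2) := by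
  set μ := ∑ b, v b * h b
  have hdev : ∀ a, |h a - μ| ≤ c := fun a => by
    simpa [← sum_mul, hv1] using abs_sum_mul_sub_sum_mul_le hv0 hv1 (f := fun _ => h a) (hc a)
  have hchord : ∀ a, exp (h a - μ) ≤ cosh c + (h a - μ) / c * sinh c := fun a => by
    rcases eq_or_ne c 0 with rfl | hc0
    · simp [abs_nonpos_iff.mp (hdev a)]
    · have ht : |(h a - μ) / c| ≤ 1 := by
        rw [abs_div]
        exact div_le_one_of_le₀ ((hdev a).trans (le_abs_self c)) (abs_nonneg c)
      simpa [div_mul_cancel₀ _ hc0] using exp_mul_le_cosh_add_mul_sinh ht c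
  have hcentered : ∑ a, v a * (h a - μ) = 0 := by
    simp only [mul_sub, sum_sub_distrib, ← sum_mul, hv1, one_mul, μ, sub_self]
  calc ∑ a, v a * exp (h a - μ) ≤ ∑ a, v a * (cosh c + (h a - μ) / c * sinh c) :=
        sum_le_sum fun a _ => mul_le_mul_of_nonneg_left (hchord a) (hv0 a)
    _ = cosh c * ∑ a, v a + (∑ a, v a * (h a - μ)) * (sinh c / c) := by
        rw [mul_sum, sum_mul, ← sum_add_distrib]
        exact sum_congr rfl fun a _ => by ring
    _ ≤ exp (c ^ 2 / 2) := by
        rw [hv1, hcentered, mul_one, zero_mul, add_zero]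
        exact cosh_le_exp_half_sq c

end Averages

lemma sum_filter_le_exp_mul_sum_mul_exp {α : Type*} [Fintype α] {W : α → ℝ}
    (hW : ∀ a, 0 ≤ W a) (g : α → ℝ) {L : ℝ} (hL : 0 ≤ L) (t : ℝ) :
    ∑ a ∈ univ.filter (fun a => t ≤ g a), W a ≤
      exp (-(L * t)) * ∑ a, W a * exp (L * g a) := by
  rw [sum_filter, mul_sum]
  refine sum_le_sum fun a _ => ?_
  split_ifs with h
  · rw [mul_left_comm, ← exp_add]
    refine le_mul_of_one_le_right (hW a) (one_le_exp ?_)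
    nlinarith
  · exact mul_nonneg (exp_nonneg _) (mul_nonneg (hW a) (exp_nonneg _))

lemma sum_filter_le_sum_sum_filter {α ι : Type*} [Fintype α] [Fintype ι] {W : α → ℝ}
    (hW : ∀ a, 0 ≤ W a) {P : α → Prop} {Q : ι → α → Prop} [DecidablePred P]
    [∀ i, DecidablePred (Q i)] (h : ∀ a, P a → ∃ i, Q i a) :
    ∑ a ∈ univ.filter P, W a ≤ ∑ i, ∑ a ∈ univ.filter (Q i), W a := by
  simp only [sum_filter]
  rw [sum_comm]
  refine sum_le_sum fun a _ => ?_
  split_ifs with ha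
  · obtain ⟨i, hi⟩ := h a ha
    calc W a = if Q i a then W a else 0 := (if_pos hi).symm
      _ ≤ ∑ j, if Q j a then W a else 0 :=
        single_le_sum (f := fun j => if Q j a then W a else 0)
          (fun j _ => by split_ifs <;> simp [hW a]) (mem_univ i)
  · exact sum_nonneg fun j _ => by split_ifs <;> simp [hW a]

lemma exists_div_sqrt_card_le_abs {ι : Type*} [Fintype ι] [Nonempty ι] {v : ι → ℝ} {r : ℝ}
    (h : r ≤ √(∑ i, v i ^ 2)) : ∃ i, r / √(Fintype.card ι) ≤ |v i| := by
  by_contra! hlt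
  have hq : (0 : ℝ) < Fintype.card ι := by exact_mod_cast Fintype.card_pos
  have hr : 0 < r := by
    have := (abs_nonneg _).trans_lt (hlt (Classical.arbitrary ι))
    exact (div_pos_iff_of_pos_right (sqrt_pos.mpr hq)).mp this
  have hsum : ∑ i, v i ^ 2 < r ^ 2 :=
    calc ∑ i, v i ^ 2 < ∑ _i : ι, (r / √(Fintype.card ι)) ^ 2 :=
          sum_lt_sum_of_nonempty univ_nonempty fun i _ =>
            sq_lt_sq.mpr ((hlt i).trans_le (le_abs_self _))
      _ = r ^ 2 := by
          rw [sum_const, card_univ, nsmul_eq_mul, div_pow, sq_sqrt hq.le]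
          field_simp
  exact absurd h (not_le.mpr ((sqrt_lt' hr).mpr hsum))

lemma Fin.sum_univ_pi_succ {M : Type*} [AddCommMonoid M] {K : ℕ} {X : Fin (K + 1) → Type*}
    [∀ k, Fintype (X k)] (F : (∀ k, X k) → M) :
    ∑ x, F x = ∑ a : X 0, ∑ y : ∀ i : Fin K, X i.succ, F (Fin.cons a y) := by
  rw [← (Fin.consEquiv X).sum_comp, Fintype.sum_prod_type]
  rfl

lemma sum_prod_mul_eq_sum_mul_sum_cons {K : ℕ} {X : Fin (K + 1) → Type*} [∀ k, Fintype (X k)]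
    (w : ∀ k, X k → ℝ) (F : (∀ k, X k) → ℝ) :
    ∑ x, (∏ k, w k (x k)) * F x =
      ∑ a, w 0 a *
        ∑ y : ∀ i : Fin K, X i.succ, (∏ i, w i.succ (y i)) * F (Fin.cons a y) := by
  rw [Fin.sum_univ_pi_succ]
  refine sum_congr rfl fun a _ => ?_
  rw [mul_sum]
  refine sum_congr rfl fun y _ => ?_
  simp only [Fin.prod_univ_succ, Fin.cons_zero, Fin.cons_succ, mul_assoc]

section McDiarmid

variable {K : ℕ} {X : Fin K → Type*} [∀ k, Fintype (X k)] {w : ∀ k, X k → ℝ}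
  {c : Fin K → ℝ} {V : ℝ}

theorem mcdiarmid_mgf_le (hw0 : ∀ k a, 0 ≤ w k a) (hw1 : ∀ k, ∑ a, w k a = 1)
    {f : (∀ k, X k) → ℝ} (hf : ∀ k x y, (∀ j ≠ k, x j = y j) → |f x - f y| ≤ c k) :
    ∑ x, (∏ k, w k (x k)) * exp (f x - ∑ y, (∏ k, w k (y k)) * f y) ≤
      exp ((∑ k, c k ^ 2) / 2) := by
  induction K with
  | zero => simp
  | succ K ih =>
    set W : (∀ i : Fin K, X i.succ) → ℝ := fun y => ∏ i, w i.succ (y i)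
    set g : X 0 → ℝ := fun a => ∑ y, W y * f (Fin.cons a y)
    have hW0 : ∀ y, 0 ≤ W y := fun y => prod_nonneg fun i _ => hw0 _ _
    have hW1 : ∑ y, W y = 1 := by simp [W, ← Fintype.prod_sum, hw1]
    have hinner : ∀ a, ∑ y, W y * exp (f (Fin.cons a y) - g a) ≤
        exp ((∑ i : Fin K, c i.succ ^ 2) / 2) := fun a =>
      ih (fun i => hw0 i.succ) (fun i => hw1 i.succ) fun i x y hxy =>
        hf i.succ _ _ fun j hj => by
          cases j using Fin.cases with
          | zero => rfl
          | succ j => exact hxy j fun h => hj (h ▸ rfl)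
    have houter : ∑ a, w 0 a * exp (g a - ∑ b, w 0 b * g b) ≤ exp (c 0 ^ 2 / 2) :=
      sum_mul_exp_sub_mean_le (hw0 0) (hw1 0) fun a b =>
        abs_sum_mul_sub_sum_mul_le hW0 hW1 fun y => hf 0 _ _ fun j hj => by
          cases j using Fin.cases with
          | zero => exact absurd rfl hj
          | succ j => rfl
    rw [sum_prod_mul_eq_sum_mul_sum_cons w f, sum_prod_mul_eq_sum_mul_sum_cons]
    calc ∑ a, w 0 a * ∑ y, W y * exp (f (Fin.cons a y) - ∑ b, w 0 b * g b)
        = ∑ a, w 0 a * exp (g a - ∑ b, w 0 b * g b) *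
            ∑ y, W y * exp (f (Fin.cons a y) - g a) := by
          refine sum_congr rfl fun a _ => ?_
          rw [mul_assoc]
          congr 1
          rw [mul_sum]
          refine sum_congr rfl fun y _ => ?_
          rw [mul_left_comm, ← exp_add, sub_add_sub_cancel']
      _ ≤ ∑ a, w 0 a * exp (g a - ∑ b, w 0 b * g b) *
            exp ((∑ i : Fin K, c i.succ ^ 2) / 2) :=
          sum_le_sum fun a _ =>
            mul_le_mul_of_nonneg_left (hinner a) (mul_nonneg (hw0 0 a) (exp_nonneg _))
      _ ≤ exp (c 0 ^ 2 / 2) * exp ((∑ i : Fin K, c i.succ ^ 2) / 2) := by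
          rw [← sum_mul]
          exact mul_le_mul_of_nonneg_right houter (exp_nonneg _)
      _ = exp ((∑ k, c k ^ 2) / 2) := by
          rw [← exp_add, Fin.sum_univ_succ, add_div]

theorem mcdiarmid_tail_le (hw0 : ∀ k a, 0 ≤ w k a) (hw1 : ∀ k, ∑ a, w k a = 1)
    {f : (∀ k, X k) → ℝ} (hf : ∀ k x y, (∀ j ≠ k, x j = y j) → |f x - f y| ≤ c k)
    {t : ℝ} (ht : 0 ≤ t) (hV : ∑ k, c k ^ 2 ≤ V) :
    ∑ x ∈ univ.filter (fun x => t ≤ f x - ∑ y, (∏ k, w k (y k)) * f y),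
        ∏ k, w k (x k) ≤ exp (-t ^ 2 / (2 * V)) := by
  set μ := ∑ y, (∏ k, w k (y k)) * f y
  have hW : ∀ x : ∀ k, X k, 0 ≤ ∏ k, w k (x k) := fun x => prod_nonneg fun k _ => hw0 k _
  have hV0 : 0 ≤ V := (sum_nonneg fun k _ => sq_nonneg (c k)).trans hV
  set L := t / V
  have hL : 0 ≤ L := div_nonneg ht hV0
  have hmgf := mcdiarmid_mgf_le hw0 hw1 (f := fun x => L * f x) (c := fun k => L * c k)
    fun k x y hxy => by
      rw [← mul_sub, abs_mul, abs_of_nonneg hL]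
      exact mul_le_mul_of_nonneg_left (hf k x y hxy) hL
  simp only [mul_left_comm _ L, ← mul_sum, mul_pow] at hmgf
  have hexponent : -(L * t) + L ^ 2 * V / 2 = -t ^ 2 / (2 * V) := by
    -- for `V = 0` both sides are `0`, since `t / 0 = 0`
    rcases hV0.eq_or_lt with hV0 | hV0
    · simp [L, ← hV0]
    · simp only [L]
      field_simp
      ring
  calc ∑ x ∈ univ.filter (fun x => t ≤ f x - μ), ∏ k, w k (x k)
      ≤ exp (-(L * t)) * ∑ x, (∏ k, w k (x k)) * exp (L * (f x - μ)) :=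
        sum_filter_le_exp_mul_sum_mul_exp hW _ hL t
    _ ≤ exp (-(L * t)) * exp (L ^ 2 * (∑ k, c k ^ 2) / 2) := by
        simp only [mul_sub]
        exact mul_le_mul_of_nonneg_left hmgf (exp_nonneg _)
    _ ≤ exp (-t ^ 2 / (2 * V)) := by
        rw [← exp_add, ← hexponent, exp_le_exp]
        gcongr

theorem mcdiarmid_abs_tail_le (hw0 : ∀ k a, 0 ≤ w k a) (hw1 : ∀ k, ∑ a, w k a = 1)
    {f : (∀ k, X k) → ℝ} (hf : ∀ k x y, (∀ j ≠ k, x j = y j) → |f x - f y| ≤ c k)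
    {t : ℝ} (ht : 0 ≤ t) (hV : ∑ k, c k ^ 2 ≤ V) :
    ∑ x ∈ univ.filter (fun x => t ≤ |f x - ∑ y, (∏ k, w k (y k)) * f y|),
        ∏ k, w k (x k) ≤ 2 * exp (-t ^ 2 / (2 * V)) := by
  classical
  set μ := ∑ y, (∏ k, w k (y k)) * f y
  have hpos := mcdiarmid_tail_le hw0 hw1 hf ht hV
  have hneg : ∑ x ∈ univ.filter (fun x => t ≤ μ - f x), ∏ k, w k (x k) ≤
      exp (-t ^ 2 / (2 * V)) := by
    simpa only [mul_neg, sum_neg_distrib, sub_neg_eq_add, neg_add_eq_sub] using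
      mcdiarmid_tail_le hw0 hw1 (f := fun x => -f x)
        (fun k x y hxy => by rw [neg_sub_neg, abs_sub_comm]; exact hf k x y hxy) ht hV
  simp only [le_abs, neg_sub, filter_or]
  calc _ ≤ _ := le_add_of_nonneg_right (sum_nonneg fun x _ => prod_nonneg fun k _ => hw0 k _)
    _ = _ := sum_union_inter
    _ ≤ 2 * exp (-t ^ 2 / (2 * V)) := by linarith

theorem mcdiarmid_norm_tail_le {ι : Type*} [Fintype ι] [Nonempty ι]
    (hw0 : ∀ k a, 0 ≤ w k a) (hw1 : ∀ k, ∑ a, w k a = 1) {F : (∀ k, X k) → ι → ℝ}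
    (hF : ∀ i k x y, (∀ j ≠ k, x j = y j) → |F x i - F y i| ≤ c k)
    {r : ℝ} (hr : 0 ≤ r) (hV : ∑ k, c k ^ 2 ≤ V) :
    ∑ x ∈ univ.filter
        (fun x => r ≤ √(∑ i, (F x i - ∑ y, (∏ k, w k (y k)) * F y i) ^ 2)),
        ∏ k, w k (x k) ≤
      2 * Fintype.card ι * exp (-r ^ 2 / (2 * Fintype.card ι * V)) := by
  have hq : (0 : ℝ) < Fintype.card ι := by exact_mod_cast Fintype.card_pos
  calc _ ≤ ∑ i, ∑ x ∈ univ.filter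
            (fun x => r / √(Fintype.card ι) ≤ |F x i - ∑ y, (∏ k, w k (y k)) * F y i|),
          ∏ k, w k (x k) :=
        sum_filter_le_sum_sum_filter (fun x => prod_nonneg fun k _ => hw0 k _)
          fun x hx => exists_div_sqrt_card_le_abs hx
    _ ≤ ∑ _i : ι, 2 * exp (-(r / √(Fintype.card ι)) ^ 2 / (2 * V)) :=
        sum_le_sum fun i _ => mcdiarmid_abs_tail_le hw0 hw1 (hF i) (by positivity) hV
    _ = 2 * Fintype.card ι * exp (-r ^ 2 / (2 * Fintype.card ι * V)) := by
        rw [sum_const, card_univ, nsmul_eq_mul, div_pow, sq_sqrt hq.le]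
        ring_nf

end McDiarmid

lemma hamDist_le_choose_of_eq_of_ne {K : ℕ} {n : Fin K → ℕ} {x y : Cfg K n} {k : Fin K}
    (h : ∀ j ≠ k, x j = y j) : hamDist x y ≤ Nat.choose (n k) 2 := by
  rw [hamDist, sum_eq_single k fun j _ hj => by simp [h j hj]]
  · exact (card_filter_le _ _).trans_eq (by simp)
  · simp

lemma sq_mul_choose_two_mul_le {m N : ℕ} (hm : m ≤ N) (A : ℝ) :
    (A * m.choose 2 * N) ^ 2 ≤ A ^ 2 * N ^ 6 * m.choose 2 := by
  have hchoose : (m.choose 2 : ℝ) ≤ (N : ℝ) ^ 2 := by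
    exact_mod_cast (Nat.choose_le_pow m 2).trans (Nat.pow_le_pow_left hm 2)
  have hN : (N : ℝ) ^ 4 ≤ (N : ℝ) ^ 6 := by
    rcases N.eq_zero_or_pos with rfl | hN
    · simp
    · exact pow_le_pow_right₀ (by exact_mod_cast hN) (by norm_num)
  calc (A * m.choose 2 * N) ^ 2 = A ^ 2 * m.choose 2 * (m.choose 2 * N ^ 2) := by ring
    _ ≤ A ^ 2 * m.choose 2 * (N ^ 2 * N ^ 2) := by gcongr
    _ ≤ A ^ 2 * N ^ 6 * m.choose 2 := by
        rw [← pow_add, mul_right_comm]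
        gcongr

theorem statement3_general
    (K : ℕ)
    (n : Fin K → ℕ)
    (hM : 1 ≤ ∑ k, Nat.choose (n k) 2)
    (N : ℕ) (hNub : ∀ k, n k ≤ N)
    (dk : Fin K → ℕ)
    (η : (k : Fin K) → Fin (dk k) → ℝ)
    (sk : (k : Fin K) → (Fin (Nat.choose (n k) 2) → Bool) → Fin (dk k) → ℝ)
    (Z : ℝ)
    (hZ : Z = ∑ x : Cfg K n, Real.exp (∑ k, ∑ i, η k i * sk k (x k) i))
    (p : Cfg K n → ℝ)
    (hp : ∀ x, p x = Real.exp (∑ k, ∑ i, η k i * sk k (x k) i) / Z)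
    (s : Cfg K n → ((Σ k : Fin K, Fin (dk k)) → ℝ))
    (q : ℕ) (hq : 1 ≤ q)
    (J : ((Σ k : Fin K, Fin (dk k)) → ℝ) →ₗ[ℝ] (Fin q → ℝ))
    (A : ℝ) (hA : 0 < A)
    (hJ : ∀ (x y : Cfg K n) (i : Fin q),
      |J (s x - s y) i| ≤ A * (hamDist x y : ℝ) * (N : ℝ)) :
    ∀ ε : ℝ, 0 < ε →
      (∑' x : {x : Cfg K n //
          ε * (∑ k, ((Nat.choose (n k) 2 : ℝ))) ≤
            Real.sqrt (∑ i, (J (s x) i - ∑ y : Cfg K n, p y * J (s y) i) ^ 2)}, p x.1) ≤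
        2 * (q : ℝ) * Real.exp (-(ε ^ 2 * (∑ k, ((Nat.choose (n k) 2 : ℝ)))) /
          (2 * (q : ℝ) * A ^ 2 * (N : ℝ) ^ 6)) := by
  intro ε hε
  set M : ℝ := ∑ k, (Nat.choose (n k) 2 : ℝ)
  have hM1 : (1 : ℝ) ≤ M := by simp only [M]; exact_mod_cast hM
  have : Nonempty (Fin q) := ⟨⟨0, hq⟩⟩
  set w : ∀ k, (Fin (Nat.choose (n k) 2) → Bool) → ℝ :=
    fun k => softmax fun b => ∑ i, η k i * sk k b i
  have hpw : ∀ x, p x = ∏ k, w k (x k) := fun x => by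
    rw [hp, hZ]
    exact softmax_sum_pi (fun k b => ∑ i, η k i * sk k b i) x
  have hbd : ∀ i k (x y : Cfg K n), (∀ j ≠ k, x j = y j) →
      |J (s x) i - J (s y) i| ≤ A * Nat.choose (n k) 2 * N := fun i k x y hxy => by
    calc |J (s x) i - J (s y) i| = |J (s x - s y) i| := by rw [map_sub, Pi.sub_apply]
      _ ≤ A * hamDist x y * N := hJ x y i
      _ ≤ A * Nat.choose (n k) 2 * N := by
          gcongr
          exact_mod_cast hamDist_le_choose_of_eq_of_ne hxy
  rw [tsum_fintype, ← sum_subtype _ (fun x => mem_filter_univ x) p]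
  simp only [hpw]
  have hV : ∑ k, (A * Nat.choose (n k) 2 * N) ^ 2 ≤ A ^ 2 * N ^ 6 * M := by
    rw [mul_sum]
    exact sum_le_sum fun k _ => sq_mul_choose_two_mul_le (hNub k) A
  calc _ ≤ 2 * q * exp (-(ε * M) ^ 2 / (2 * q * (A ^ 2 * N ^ 6 * M))) := by
        simpa using mcdiarmid_norm_tail_le (w := w) (fun k => softmax_nonneg _)
          (fun k => sum_softmax _) hbd (mul_nonneg hε.le (by linarith)) hV
    _ = _ := by
        rw [show -(ε * M) ^ 2 = -(ε ^ 2 * M) * M by ring,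
          show 2 * q * (A ^ 2 * N ^ 6 * M) = 2 * q * A ^ 2 * N ^ 6 * M by ring,
          mul_div_mul_right _ _ (by linarith)]

/-- Proposition 3 of the paper, with the unspecified constant made explicit:
concentration of the score vector `J(s(X) − E s(X))`, where `s` is the (blockwise)
sufficient statistic of an exponential-family pmf with local dependence and the
linear map `J` is the transposed gradient `(∇_θ η(θ))ᵀ` at the data-generating
parameter.  If `‖J(s(x) − s(y))‖_∞ ≤ A·d(x,y)·N`, then for every `ε > 0`,
`P(‖J(s(X)) − E[J(s(X))]‖₂ ≥ ε·M) ≤ 2·q·exp(−ε²·M/(2·q·A²·N⁶))`. -/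
theorem statement3
    (K : ℕ) (hK : 1 ≤ K)
    (n : Fin K → ℕ) (hn : ∀ k, 1 ≤ n k)
    (hM : 1 ≤ ∑ k, Nat.choose (n k) 2)
    (N : ℕ) (hNub : ∀ k, n k ≤ N) (hNmem : ∃ k, n k = N)
    (dk : Fin K → ℕ)
    (η : (k : Fin K) → Fin (dk k) → ℝ)
    (sk : (k : Fin K) → (Fin (Nat.choose (n k) 2) → Bool) → Fin (dk k) → ℝ)
    (Z : ℝ)
    (hZ : Z = ∑ x : Cfg K n, Real.exp (∑ k, ∑ i, η k i * sk k (x k) i))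
    (p : Cfg K n → ℝ)
    (hp : ∀ x, p x = Real.exp (∑ k, ∑ i, η k i * sk k (x k) i) / Z)
    (s : Cfg K n → ((Σ k : Fin K, Fin (dk k)) → ℝ))
    (hs : ∀ (x : Cfg K n) (k : Fin K) (i : Fin (dk k)), s x ⟨k, i⟩ = sk k (x k) i)
    (q : ℕ) (hq : 1 ≤ q)
    (J : ((Σ k : Fin K, Fin (dk k)) → ℝ) →ₗ[ℝ] (Fin q → ℝ))
    (A : ℝ) (hA : 0 < A)
    (hJ : ∀ (x y : Cfg K n) (i : Fin q),
      |J (s x - s y) i| ≤ A * (hamDist x y : ℝ) * (N : ℝ)) :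
    ∀ ε : ℝ, 0 < ε →
      (∑' x : {x : Cfg K n //
          ε * (∑ k, ((Nat.choose (n k) 2 : ℝ))) ≤
            Real.sqrt (∑ i, (J (s x) i - ∑ y : Cfg K n, p y * J (s y) i) ^ 2)}, p x.1) ≤
        2 * (q : ℝ) * Real.exp (-(ε ^ 2 * (∑ k, ((Nat.choose (n k) 2 : ℝ)))) /
          (2 * (q : ℝ) * A ^ 2 * (N : ℝ) ^ 6)) :=
  statement3_general K n hM N hNub dk η sk Z hZ p hp s q hq J A hA hJ
end

section
/- Let n ≥ 3, let E_n = {{i,j} : 1 ≤ i < j ≤ n}, and let T(x) = ∑_{i<j} x_{ij} · max_{h ≠ i,j} (x_{ih}·x_{jh}) denote the transitive-edge count of a configuration x ∈ {0,1}^{E_n}. Then T is Lipschitz with constant 2n − 3 with respect to the Hamming distance: for all x, y ∈ {0,1}^{E_n}, |T(x) − T(y)| ≤ (2n − 3) · d(x, y), where d(x, y) is the number of edges e ∈ E_n with x_e ≠ y_e. -/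
/-
Write `T(x) = ∑ₑ [e is transitive in x]`. Whether `e` is transitive depends only on the edges
sharing an endpoint with `e`, so a summand can change only if `e` shares an endpoint with an
edge `f` on which `x` and `y` differ. An edge `{a, b}` shares an endpoint with at most
`(n - 1) + (n - 1) - 1 = 2n - 3` edges (itself counted once), whence the bound.
-/

open scoped BigOperators

/-- The edge set of the complete graph on `n` vertices, encoded as ordered pairs
`(i, j)` with `i < j`. -/
abbrev EdgeIdx (n : ℕ) : Type := {q : Fin n × Fin n // q.1 < q.2}

/-- A binary undirected graph configuration on `n` vertices. -/
abbrev GraphCfg (n : ℕ) : Type := EdgeIdx n → Bool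

/-- Symmetric edge indicator `x_{ij}` of a configuration. -/
def edgeVal {n : ℕ} (x : GraphCfg n) (i j : Fin n) : Bool :=
  if h : i < j then x ⟨(i, j), h⟩ else if h : j < i then x ⟨(j, i), h⟩ else false

/-- The transitive-edge count
`T(x) = ∑_{i<j} x_{ij} · max_{h ≠ i,j} (x_{ih}·x_{jh})`. -/
def transEdges {n : ℕ} (x : GraphCfg n) : ℝ :=
  ∑ e : EdgeIdx n,
    if x e = true ∧ ∃ h : Fin n, h ≠ e.1.1 ∧ h ≠ e.1.2 ∧
        edgeVal x e.1.1 h = true ∧ edgeVal x e.1.2 h = true then (1 : ℝ) else 0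

open Finset

lemma abs_sum_boole_sub_sum_boole_le {ι : Type*} [Fintype ι] (p q : ι → Prop)
    [DecidablePred p] [DecidablePred q] (A : Finset ι) (hpq : ∀ i ∉ A, (p i ↔ q i)) :
    |∑ i, (if p i then (1 : ℝ) else 0) - ∑ i, if q i then (1 : ℝ) else 0| ≤ #A := by
  classical
  rw [← sum_sub_distrib]
  calc _ ≤ ∑ i, |(if p i then (1 : ℝ) else 0) - if q i then 1 else 0| := abs_sum_le_sum_abs _ _
    _ ≤ ∑ i, if i ∈ A then (1 : ℝ) else 0 := by
      refine sum_le_sum fun i _ => ?_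
      by_cases hi : i ∈ A
      · simp only [hi, if_true]
        split_ifs <;> norm_num
      · simp [hi, if_congr (hpq i hi) rfl rfl]
    _ = #A := by simp

namespace EdgeIdx

variable {n : ℕ}

def incident (a : Fin n) : Finset (EdgeIdx n) :=
  univ.filter fun e => e.1.1 = a ∨ e.1.2 = a

def closedNbhd (f : EdgeIdx n) : Finset (EdgeIdx n) :=
  incident f.1.1 ∪ incident f.1.2

def otherEnd (a : Fin n) (e : EdgeIdx n) : Fin n :=
  if e.1.1 = a then e.1.2 else e.1.1

lemma self_mem_closedNbhd (e : EdgeIdx n) : e ∈ closedNbhd e := by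
  simp [closedNbhd, incident]

lemma mem_closedNbhd_comm {e f : EdgeIdx n} : e ∈ closedNbhd f ↔ f ∈ closedNbhd e := by
  simp only [closedNbhd, incident, mem_union, mem_filter, mem_univ, true_and]
  grind

lemma card_incident_lt (a : Fin n) : #(incident a) < n := by
  have hmaps : Set.MapsTo (otherEnd a) (incident a) (univ.erase a) := by
    intro e he
    have := e.2
    simp only [incident, otherEnd, coe_filter, coe_erase, mem_univ, true_and] at he ⊢
    grind
  have hinj : Set.InjOn (otherEnd a) (incident a) := by
    intro e he f hf hef
    have := e.2
    have := f.2
    simp only [incident, otherEnd, coe_filter, mem_univ, true_and] at he hf hef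
    apply Subtype.ext
    grind
  calc #(incident a) ≤ #(univ.erase a) := card_le_card_of_injOn _ hmaps hinj
    _ < #(univ : Finset (Fin n)) := card_erase_lt_of_mem (mem_univ a)
    _ = n := card_fin n

lemma card_closedNbhd_add_three_le (f : EdgeIdx n) : #(closedNbhd f) + 3 ≤ 2 * n := by
  have hunion := card_union_add_card_inter (incident f.1.1) (incident f.1.2)
  have hinter : 0 < #(incident f.1.1 ∩ incident f.1.2) :=
    card_pos.2 ⟨f, by simp [incident]⟩
  have := card_incident_lt f.1.1
  have := card_incident_lt f.1.2
  rw [closedNbhd]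
  omega

lemma card_closedNbhd_le (f : EdgeIdx n) : (#(closedNbhd f) : ℝ) ≤ 2 * n - 3 := by
  have h : ((#(closedNbhd f) + 3 : ℕ) : ℝ) ≤ ((2 * n : ℕ) : ℝ) :=
    Nat.cast_le.2 (card_closedNbhd_add_three_le f)
  push_cast at h
  linarith

end EdgeIdx

open EdgeIdx

def IsTransitiveEdge {n : ℕ} (x : GraphCfg n) (e : EdgeIdx n) : Prop :=
  x e = true ∧ ∃ h : Fin n, h ≠ e.1.1 ∧ h ≠ e.1.2 ∧
    edgeVal x e.1.1 h = true ∧ edgeVal x e.1.2 h = true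

lemma edgeVal_congr {n : ℕ} {x y : GraphCfg n} {i : Fin n} (j : Fin n)
    (hxy : ∀ f ∈ incident i, x f = y f) : edgeVal x i j = edgeVal y i j := by
  unfold edgeVal
  split_ifs
  · exact hxy _ (by simp [incident])
  · exact hxy _ (by simp [incident])
  · rfl

lemma isTransitiveEdge_congr {n : ℕ} {x y : GraphCfg n} {e : EdgeIdx n}
    (hxy : ∀ f ∈ closedNbhd e, x f = y f) : IsTransitiveEdge x e ↔ IsTransitiveEdge y e := by
  have h₁ (j : Fin n) : edgeVal x e.1.1 j = edgeVal y e.1.1 j :=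
    edgeVal_congr j fun f hf => hxy f (mem_union_left _ hf)
  have h₂ (j : Fin n) : edgeVal x e.1.2 j = edgeVal y e.1.2 j :=
    edgeVal_congr j fun f hf => hxy f (mem_union_right _ hf)
  simp only [IsTransitiveEdge, hxy e (self_mem_closedNbhd e), h₁, h₂]

theorem statement16_general (n : ℕ) (x y : GraphCfg n) :
    |transEdges x - transEdges y| ≤
      (2 * (n : ℝ) - 3) * ((Finset.univ.filter (fun e : EdgeIdx n => x e ≠ y e)).card : ℝ) := by
  set D := univ.filter fun e : EdgeIdx n => x e ≠ y e
  have hagree : ∀ e ∉ D.biUnion closedNbhd, IsTransitiveEdge x e ↔ IsTransitiveEdge y e := by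
    intro e he
    refine isTransitiveEdge_congr fun f hf => ?_
    by_contra hne
    exact he (mem_biUnion.2 ⟨f, mem_filter.2 ⟨mem_univ f, hne⟩, mem_closedNbhd_comm.1 hf⟩)
  calc |transEdges x - transEdges y| ≤ #(D.biUnion closedNbhd) :=
        abs_sum_boole_sub_sum_boole_le _ _ _ hagree
    _ ≤ ∑ f ∈ D, (#(closedNbhd f) : ℝ) := by exact_mod_cast card_biUnion_le
    _ ≤ ∑ _f ∈ D, (2 * (n : ℝ) - 3) := sum_le_sum fun f _ => card_closedNbhd_le f
    _ = (2 * (n : ℝ) - 3) * #D := by rw [sum_const, nsmul_eq_mul, mul_comm]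

/-- Verification of smoothness condition [C.4*] for the edge-and-transitive-edge
model (Corollaries 2 and 3 of the paper): the transitive-edge count is Lipschitz
with constant `2n − 3` with respect to the Hamming distance on configurations. -/
theorem statement16 (n : ℕ) (hn : 3 ≤ n) (x y : GraphCfg n) :
    |transEdges x - transEdges y| ≤
      (2 * (n : ℝ) - 3) * ((Finset.univ.filter (fun e : EdgeIdx n => x e ≠ y e)).card : ℝ) :=
  statement16_general n x y
end
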